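/- arXiv:2306.01963 — 2 statements merged into one kernel-verified Lean document; each statement's English description precedes it below -/
import Mathlib

section
/- Let (θ₁, φ₁), (θ₂, φ₂), (θ₃, φ₃) be independent, each uniformly distributed on [0,2π]², and set hᵢ := sin θᵢ·sin φᵢ. Then for every real a and all real s₁, s₂, E[cos(s₁·a·(h₁ − h₃))·cos(s₂·a·(h₂ − h₃))] = (J₀(s₁·a/2)²·J₀(s₂·a/2)²/2)·(J₀((s₁ + s₂)·a/2)² + J₀((s₁ − s₂)·a/2)²). -/
open Real MeasureTheory Finset

/-- Bessel function of the first kind of order zero (integral representation). -/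
noncomputable def J₀ (x : ℝ) : ℝ :=
  (1 / (2 * π)) * ∫ t in (0:ℝ)..(2 * π), Real.cos (x * Real.sin t)

/-- Expectation over three independent pairs of angles, each uniform on `[0, 2π]²`. -/
noncomputable def E6 (f : ℝ → ℝ → ℝ → ℝ → ℝ → ℝ → ℝ) : ℝ :=
  (1 / (2 * π) ^ 6) *
    ∫ θ₁ in (0:ℝ)..(2 * π), ∫ φ₁ in (0:ℝ)..(2 * π),
      ∫ θ₂ in (0:ℝ)..(2 * π), ∫ φ₂ in (0:ℝ)..(2 * π),
        ∫ θ₃ in (0:ℝ)..(2 * π), ∫ φ₃ in (0:ℝ)..(2 * π), f θ₁ φ₁ θ₂ φ₂ θ₃ φ₃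

/-! With `h = sin θ * sin φ` for `(θ, φ)` uniform on `[0, 2π]²`, the expectation of
`cos (c * h + d)` is `J₀ (c / 2) ^ 2 * cos d`. This rests on
`(1 / 2π) ∫ J₀ (c sin θ) dθ = J₀ (c / 2) ^ 2`: write `J₀ z ^ 2` as the average of
`cos (z sin u - z sin v)` over the torus, substitute `v = u - w` so that
`sin u - sin v = 2 sin (w / 2) cos (u - w / 2)`, and integrate out `u` first; the integral over
`w` of the `π`-periodic `J₀ (2 z sin (w / 2))` folds back to one over `θ = w / 2`. Expanding the
product of cosines into a sum, the three pairs of angles are then integrated out one after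
another. -/

open Function

namespace Function.Periodic

variable {E : Type*} [NormedAddCommGroup E] [NormedSpace ℝ E] {f : ℝ → E} {T : ℝ}

theorem intervalIntegral_comp_add_right (hf : Periodic f T) (s : ℝ) :
    ∫ t in 0..T, f (t + s) = ∫ t in 0..T, f t := by
  simpa [add_comm] using hf.intervalIntegral_add_eq s 0

theorem intervalIntegral_comp_sub_left (hf : Periodic f T) (s : ℝ) :
    ∫ t in 0..T, f (s - t) = ∫ t in 0..T, f t := by
  simpa using hf.intervalIntegral_add_eq (s - T) 0

theorem intervalIntegral_comp_div_two (hf : Periodic f T) (hfc : Continuous f) :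
    ∫ t in 0..2 * T, f (t / 2) = ∫ t in 0..2 * T, f t := by
  have := hf.intervalIntegral_add_zsmul_eq 2 0 fun _ _ ↦ hfc.intervalIntegrable _ _
  simp only [zero_add, two_zsmul] at this
  rw [intervalIntegral.integral_comp_div _ two_ne_zero, zero_div,
    mul_div_cancel_left₀ _ two_ne_zero, two_mul, this, two_smul]

end Function.Periodic

section DoubleIntegral

variable {E : Type*} [NormedAddCommGroup E] [NormedSpace ℝ E]

theorem intervalIntegral_intervalIntegral_swap_of_continuous [CompleteSpace E] {F : ℝ → ℝ → E}
    (hF : Continuous F.uncurry) (a b c d : ℝ) :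
    ∫ x in a..b, ∫ y in c..d, F x y = ∫ y in c..d, ∫ x in a..b, F x y :=
  intervalIntegral_intervalIntegral_swap <|
    (hF.continuousOn.integrableOn_compact (isCompact_uIcc.prod isCompact_uIcc)).mono_set
      (Set.prod_mono Set.uIoc_subset_uIcc Set.uIoc_subset_uIcc)

theorem intervalIntegral_intervalIntegral_add {F G : ℝ → ℝ → E} (hF : Continuous F.uncurry)
    (hG : Continuous G.uncurry) (a b c d : ℝ) :
    ∫ x in a..b, ∫ y in c..d, (F x y + G x y) =
      (∫ x in a..b, ∫ y in c..d, F x y) + ∫ x in a..b, ∫ y in c..d, G x y := by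
  have inner_integrable {H : ℝ → ℝ → E} (hH : Continuous H.uncurry) (x : ℝ) :
      IntervalIntegrable (H x) volume c d :=
    (hH.comp (Continuous.prodMk_right x)).intervalIntegrable _ _
  simp_rw [intervalIntegral.integral_add (inner_integrable hF _) (inner_integrable hG _)]
  have outer_integrable {H : ℝ → ℝ → E} (hH : Continuous H.uncurry) :
      IntervalIntegrable (fun x ↦ ∫ y in c..d, H x y) volume a b :=
    Continuous.intervalIntegrable
      (intervalIntegral.continuous_parametric_intervalIntegral_of_continuous' hH c d) _ _
  exact intervalIntegral.integral_add (outer_integrable hF) (outer_integrable hG)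

end DoubleIntegral

theorem intervalIntegral_cos_mul_sin (c : ℝ) :
    ∫ t in 0..2 * π, cos (c * sin t) = 2 * π * J₀ c := by
  rw [J₀]
  field_simp

theorem J₀_neg (c : ℝ) : J₀ (-c) = J₀ c := by
  simp [J₀]

theorem continuous_J₀ : Continuous J₀ :=
  continuous_const.mul <|
    intervalIntegral.continuous_parametric_intervalIntegral_of_continuous' (by fun_prop) _ _

theorem periodic_comp_sin {g : ℝ → ℝ} : Periodic (fun t ↦ g (sin t)) (2 * π) := by
  simp [Periodic, sin_add_two_pi]

theorem intervalIntegral_sin_mul_sin (c : ℝ) : ∫ t in 0..2 * π, sin (c * sin t) = 0 := by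
  have h := (periodic_comp_sin (g := fun x ↦ sin (c * x))).intervalIntegral_comp_add_right π
  simp only [sin_add_pi, mul_neg, sin_neg, intervalIntegral.integral_neg] at h
  linarith

theorem intervalIntegral_cos_mul_sin_add (c d : ℝ) :
    ∫ t in 0..2 * π, cos (c * sin t + d) = 2 * π * J₀ c * cos d := by
  simp_rw [cos_add]
  rw [intervalIntegral.integral_sub (Continuous.intervalIntegrable (by fun_prop) _ _)
      (Continuous.intervalIntegrable (by fun_prop) _ _),
    intervalIntegral.integral_mul_const, intervalIntegral.integral_mul_const,
    intervalIntegral_sin_mul_sin, intervalIntegral_cos_mul_sin]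
  ring

theorem sq_J₀_eq_intervalIntegral_cos_sub (z : ℝ) :
    (2 * π * J₀ z) ^ 2 = ∫ u in 0..2 * π, ∫ v in 0..2 * π, cos (z * sin u - z * sin v) := by
  have inner (u : ℝ) :
      ∫ v in 0..2 * π, cos (z * sin u - z * sin v) = 2 * π * J₀ z * cos (z * sin u) := by
    simpa [neg_mul, ← sub_eq_neg_add, J₀_neg] using
      intervalIntegral_cos_mul_sin_add (-z) (z * sin u)
  simp_rw [inner, intervalIntegral.integral_const_mul, intervalIntegral_cos_mul_sin]
  ring

theorem intervalIntegral_cos_sub_mul_sin (z u : ℝ) :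
    ∫ v in 0..2 * π, cos (z * sin u - z * sin v) =
      ∫ w in 0..2 * π, cos (2 * z * sin (w / 2) * sin (u + (π - w) / 2)) := by
  rw [← (periodic_comp_sin (g := fun x ↦ cos (z * sin u - z * x))).intervalIntegral_comp_sub_left u]
  refine intervalIntegral.integral_congr fun w _ ↦ congrArg cos ?_
  rw [show u + (π - w) / 2 = (u + (u - w)) / 2 + π / 2 by ring, sin_add_pi_div_two,
    show w / 2 = (u - (u - w)) / 2 by ring]
  linear_combination z * sin_sub_sin u (u - w)

theorem intervalIntegral_J₀_mul_sin (c : ℝ) :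
    ∫ θ in 0..2 * π, J₀ (c * sin θ) = 2 * π * J₀ (c / 2) ^ 2 := by
  have hper : Periodic (fun θ ↦ J₀ (c * sin θ)) π := fun θ ↦ by
    simp only [sin_add_pi, mul_neg, J₀_neg]
  have hcont : Continuous fun θ ↦ J₀ (c * sin θ) := continuous_J₀.comp (by fun_prop)
  have inner (w : ℝ) : ∫ u in 0..2 * π, cos (c * sin (w / 2) * sin (u + (π - w) / 2)) =
      2 * π * J₀ (c * sin (w / 2)) := by
    rw [Periodic.intervalIntegral_comp_add_right
      (periodic_comp_sin (g := fun x ↦ cos (c * sin (w / 2) * x))), intervalIntegral_cos_mul_sin]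
  have hsq := sq_J₀_eq_intervalIntegral_cos_sub (c / 2)
  simp_rw [intervalIntegral_cos_sub_mul_sin, mul_div_cancel₀ c two_ne_zero] at hsq
  rw [intervalIntegral_intervalIntegral_swap_of_continuous (by fun_prop)] at hsq
  simp_rw [inner, intervalIntegral.integral_const_mul, hper.intervalIntegral_comp_div_two hcont]
    at hsq
  exact mul_left_cancel₀ two_pi_pos.ne' (by linear_combination -hsq)

theorem intervalIntegral_cos_mul_sin_mul_sin_add (c d : ℝ) :
    ∫ θ in 0..2 * π, ∫ φ in 0..2 * π, cos (c * (sin θ * sin φ) + d) =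
      (2 * π) ^ 2 * J₀ (c / 2) ^ 2 * cos d := by
  simp_rw [← mul_assoc, intervalIntegral_cos_mul_sin_add, intervalIntegral.integral_mul_const,
    intervalIntegral.integral_const_mul, intervalIntegral_J₀_mul_sin]
  ring

theorem intervalIntegral_cos_mul_sin_mul_sin (c : ℝ) :
    ∫ θ in 0..2 * π, ∫ φ in 0..2 * π, cos (c * (sin θ * sin φ)) =
      (2 * π) ^ 2 * J₀ (c / 2) ^ 2 := by
  simpa using intervalIntegral_cos_mul_sin_mul_sin_add c 0

theorem intervalIntegral_mul_cos_add_mul_cos (P Q c₁ c₂ d₁ d₂ : ℝ) :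
    ∫ θ in 0..2 * π, ∫ φ in 0..2 * π,
        (P * cos (c₁ * (sin θ * sin φ) + d₁) + Q * cos (c₂ * (sin θ * sin φ) + d₂)) =
      (2 * π) ^ 2 * (P * J₀ (c₁ / 2) ^ 2 * cos d₁ + Q * J₀ (c₂ / 2) ^ 2 * cos d₂) := by
  rw [intervalIntegral_intervalIntegral_add (by fun_prop) (by fun_prop)]
  simp_rw [intervalIntegral.integral_const_mul, intervalIntegral_cos_mul_sin_mul_sin_add]
  ring

theorem intervalIntegral_cos_mul_sub_mul_cos_mul_sub (q₁ q₂ A B : ℝ) :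
    ∫ θ in 0..2 * π, ∫ φ in 0..2 * π,
        cos (q₁ * (A - sin θ * sin φ)) * cos (q₂ * (B - sin θ * sin φ)) =
      (2 * π) ^ 2 / 2 *
        (J₀ ((q₁ + q₂) / 2) ^ 2 * cos (q₁ * A + q₂ * B) +
          J₀ ((q₁ - q₂) / 2) ^ 2 * cos (q₁ * A - q₂ * B)) := by
  have expand (x : ℝ) : cos (q₁ * (A - x)) * cos (q₂ * (B - x)) =
      1 / 2 * cos (-(q₁ + q₂) * x + (q₁ * A + q₂ * B)) +
        1 / 2 * cos (-(q₁ - q₂) * x + (q₁ * A - q₂ * B)) := by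
    rw [show -(q₁ + q₂) * x + (q₁ * A + q₂ * B) = q₁ * (A - x) + q₂ * (B - x) by ring,
      show -(q₁ - q₂) * x + (q₁ * A - q₂ * B) = q₁ * (A - x) - q₂ * (B - x) by ring]
    linarith [two_mul_cos_mul_cos (q₁ * (A - x)) (q₂ * (B - x))]
  simp_rw [expand, intervalIntegral_mul_cos_add_mul_cos, neg_div, J₀_neg]
  ring

theorem intervalIntegral_mul_cos_add_add_mul_cos_sub (P Q c d : ℝ) :
    ∫ θ in 0..2 * π, ∫ φ in 0..2 * π,
        (P * cos (d + c * (sin θ * sin φ)) + Q * cos (d - c * (sin θ * sin φ))) =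
      (2 * π) ^ 2 * J₀ (c / 2) ^ 2 * (P + Q) * cos d := by
  simp_rw [add_comm d, sub_eq_neg_add d, ← neg_mul, intervalIntegral_mul_cos_add_mul_cos, neg_div,
    J₀_neg]
  ring

theorem stmt_9 (a s₁ s₂ : ℝ) :
    E6 (fun θ₁ φ₁ θ₂ φ₂ θ₃ φ₃ =>
      Real.cos (s₁ * a * (Real.sin θ₁ * Real.sin φ₁ - Real.sin θ₃ * Real.sin φ₃)) *
      Real.cos (s₂ * a * (Real.sin θ₂ * Real.sin φ₂ - Real.sin θ₃ * Real.sin φ₃)))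
    = ((J₀ (s₁ * a / 2)) ^ 2 * (J₀ (s₂ * a / 2)) ^ 2 / 2) *
        ((J₀ ((s₁ + s₂) * a / 2)) ^ 2 + (J₀ ((s₁ - s₂) * a / 2)) ^ 2) := by
  simp only [E6, intervalIntegral_cos_mul_sub_mul_cos_mul_sub, intervalIntegral.integral_const_mul,
    intervalIntegral_mul_cos_add_add_mul_cos_sub, intervalIntegral_cos_mul_sin_mul_sin]
  field_simp
end

section
/- Let (θ₁, φ₁) and (θ₂, φ₂) be independent, each uniformly distributed on [0,2π]², set h₁ := sin θ₁·sin φ₁, h₂ := sin θ₂·sin φ₂, and fix a real number a. Then for all real s₁, s₂, E[cos(s₁·a·(h₁ − h₂))·cos(s₂·a·(h₁ − h₂))] = (1/2)·(J₀((s₁ + s₂)·a/2)⁴ + J₀((s₁ − s₂)·a/2)⁴). -/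
open Real MeasureTheory Finset

/-- Expectation over two independent pairs of angles, each uniform on `[0, 2π]²`. -/
noncomputable def E4 (f : ℝ → ℝ → ℝ → ℝ → ℝ) : ℝ :=
  (1 / (2 * π) ^ 4) *
    ∫ θ₁ in (0:ℝ)..(2 * π), ∫ φ₁ in (0:ℝ)..(2 * π),
      ∫ θ₂ in (0:ℝ)..(2 * π), ∫ φ₂ in (0:ℝ)..(2 * π), f θ₁ φ₁ θ₂ φ₂

namespace Function

variable {E : Type*} [NormedAddCommGroup E] [NormedSpace ℝ E] {f : ℝ → E} {T : ℝ}

theorem Periodic.intervalIntegral_comp_add_right_s13 (hf : Periodic f T) (c : ℝ) :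
    ∫ t in 0..T, f (t + c) = ∫ t in 0..T, f t := by
  rw [intervalIntegral.integral_comp_add_right]
  simpa [add_comm] using hf.intervalIntegral_add_eq c 0

theorem Periodic.intervalIntegral_comp_add_nat_mul (hf : Periodic f T)
    (h_int : ∀ t₁ t₂, IntervalIntegrable f volume t₁ t₂) {n : ℕ} (hn : n ≠ 0) (x : ℝ) :
    ∫ t in 0..T, f (x + n * t) = ∫ t in 0..T, f t := by
  have hn' : (n : ℝ) ≠ 0 := Nat.cast_ne_zero.mpr hn
  have h_periods : ∫ t in x..x + n * T, f t = n • ∫ t in x..x + T, f t := by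
    simpa using hf.intervalIntegral_add_zsmul_eq n x h_int
  rw [intervalIntegral.integral_comp_add_mul _ hn', mul_zero, add_zero, h_periods,
    hf.intervalIntegral_add_eq x 0, zero_add, ← Nat.cast_smul_eq_nsmul ℝ, smul_smul,
    inv_mul_cancel₀ hn', one_smul]

theorem Antiperiodic.intervalIntegral_eq_zero (hf : Antiperiodic f T) :
    ∫ t in 0..2 * T, f t = 0 := by
  have h := hf.periodic_two_mul.intervalIntegral_comp_add_right_s13 T
  simp only [hf _, intervalIntegral.integral_neg] at h
  have h_two : (2 : ℝ) • ∫ t in 0..2 * T, f t = 0 := by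
    rw [two_smul]
    nth_rewrite 1 [← h]
    exact neg_add_cancel _
  exact (smul_eq_zero.mp h_two).resolve_left two_ne_zero

end Function

theorem integral_cos_mul_sin (b : ℝ) :
    ∫ t in 0..2 * π, cos (b * sin t) = 2 * π * J₀ b := by
  rw [J₀]
  field_simp

theorem integral_sin_mul_sin (b : ℝ) : ∫ t in 0..2 * π, sin (b * sin t) = 0 :=
  Function.Antiperiodic.intervalIntegral_eq_zero fun t => by simp [sin_add_pi]

theorem integral_sin_mul_cos (b : ℝ) : ∫ t in 0..2 * π, sin (b * cos t) = 0 :=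
  Function.Antiperiodic.intervalIntegral_eq_zero fun t => by simp [cos_add_pi]

theorem integral_cos_mul_cos (b : ℝ) :
    ∫ t in 0..2 * π, cos (b * cos t) = 2 * π * J₀ b := by
  have hper : Function.Periodic (fun t => cos (b * cos t)) (2 * π) := fun t => by
    simp [cos_add_two_pi]
  rw [← hper.intervalIntegral_comp_add_right_s13 (π / 2), ← integral_cos_mul_sin]
  simp [cos_add_pi_div_two]

theorem integral_cos_sub_mul_cos (A b : ℝ) :
    ∫ t in 0..2 * π, cos (A - b * cos t) = cos A * (2 * π * J₀ b) := by
  simp_rw [cos_sub]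
  rw [intervalIntegral.integral_add (Continuous.intervalIntegrable (by fun_prop) _ _)
      (Continuous.intervalIntegrable (by fun_prop) _ _),
    intervalIntegral.integral_const_mul, intervalIntegral.integral_const_mul,
    integral_cos_mul_cos, integral_sin_mul_cos, mul_zero, add_zero]

noncomputable def sinMulSinIntegral (g : ℝ → ℝ) : ℝ :=
  ∫ θ in 0..2 * π, ∫ φ in 0..2 * π, g (sin θ * sin φ)

theorem sinMulSinIntegral_add {f g : ℝ → ℝ} (hf : Continuous f) (hg : Continuous g) :
    sinMulSinIntegral (fun h => f h + g h) = sinMulSinIntegral f + sinMulSinIntegral g := by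
  unfold sinMulSinIntegral
  have hinner : ∀ θ, ∫ φ in 0..2 * π, f (sin θ * sin φ) + g (sin θ * sin φ) =
      (∫ φ in 0..2 * π, f (sin θ * sin φ)) + ∫ φ in 0..2 * π, g (sin θ * sin φ) := fun θ =>
    intervalIntegral.integral_add (Continuous.intervalIntegrable (by fun_prop) _ _)
      (Continuous.intervalIntegrable (by fun_prop) _ _)
  simp_rw [hinner]
  exact intervalIntegral.integral_add (Continuous.intervalIntegrable (by fun_prop) _ _)
      (Continuous.intervalIntegrable (by fun_prop) _ _)

theorem sinMulSinIntegral_const_mul (c : ℝ) (g : ℝ → ℝ) :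
    sinMulSinIntegral (fun h => c * g h) = c * sinMulSinIntegral g := by
  simp only [sinMulSinIntegral, intervalIntegral.integral_const_mul]

theorem sinMulSinIntegral_sin_mul (c : ℝ) : sinMulSinIntegral (fun h => sin (c * h)) = 0 := by
  simp [sinMulSinIntegral, ← mul_assoc, integral_sin_mul_sin]

/-- Writing `sin θ sin φ` as `(cos (θ - φ) - cos (θ + φ)) / 2` and shifting `φ` by `θ` leaves
`cos (φ + 2θ)`, which after swapping the integrals runs twice over a period in `θ`; the double
integral then splits into a product. -/
theorem sinMulSinIntegral_cos_mul (c : ℝ) :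
    sinMulSinIntegral (fun h => cos (c * h)) = (2 * π * J₀ (c / 2)) ^ 2 := by
  set z := c / 2 with hz
  let g : ℝ → ℝ → ℝ := fun θ φ => cos (z * cos φ - z * cos (φ + 2 * θ))
  have hshift : ∀ θ, ∫ φ in 0..2 * π, cos (c * (sin θ * sin φ)) = ∫ φ in 0..2 * π, g θ φ := by
    intro θ
    have hper : Function.Periodic (g θ) (2 * π) := fun φ => by
      simp only [g, show φ + 2 * π + 2 * θ = φ + 2 * θ + 2 * π by ring, cos_add_two_pi]
    rw [← hper.intervalIntegral_comp_add_right_s13 (-θ)]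
    congr 1; ext φ
    simp only [g]
    rw [show φ + -θ + 2 * θ = φ + θ by ring, ← sub_eq_add_neg]
    congr 1
    rw [cos_sub, cos_add, hz]
    ring
  have hdouble : ∀ φ, ∫ θ in 0..2 * π, g θ φ = ∫ ψ in 0..2 * π, cos (z * cos φ - z * cos ψ) := by
    intro φ
    have hper : Function.Periodic (fun ψ => cos (z * cos φ - z * cos ψ)) (2 * π) := fun ψ => by
      simp [cos_add_two_pi]
    simpa [g, add_comm] using hper.intervalIntegral_comp_add_nat_mul
      (fun _ _ => Continuous.intervalIntegrable (by fun_prop) _ _) two_ne_zero φ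
  have hswap : ∫ θ in 0..2 * π, ∫ φ in 0..2 * π, g θ φ = ∫ φ in 0..2 * π, ∫ θ in 0..2 * π, g θ φ :=
    intervalIntegral_intervalIntegral_swap <|
      ((by fun_prop : Continuous g.uncurry).continuousOn.integrableOn_compact
        (isCompact_uIcc.prod isCompact_uIcc)).mono_set
        (Set.prod_mono Set.uIoc_subset_uIcc Set.uIoc_subset_uIcc)
  calc sinMulSinIntegral (fun h => cos (c * h))
      = ∫ θ in 0..2 * π, ∫ φ in 0..2 * π, g θ φ := by simp only [sinMulSinIntegral, hshift]
    _ = ∫ φ in 0..2 * π, cos (z * cos φ) * (2 * π * J₀ z) := by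
        simp only [hswap, hdouble, integral_cos_sub_mul_cos]
    _ = (2 * π * J₀ z) ^ 2 := by
        rw [intervalIntegral.integral_mul_const, integral_cos_mul_cos, sq]

theorem sinMulSinIntegral_cos_mul_sub (c x : ℝ) :
    sinMulSinIntegral (fun h => cos (c * (x - h))) = cos (c * x) * (2 * π * J₀ (c / 2)) ^ 2 := by
  simp_rw [mul_sub, cos_sub]
  rw [sinMulSinIntegral_add (by fun_prop) (by fun_prop), sinMulSinIntegral_const_mul,
    sinMulSinIntegral_const_mul, sinMulSinIntegral_cos_mul, sinMulSinIntegral_sin_mul,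
    mul_zero, add_zero]

theorem stmt_13 (a s₁ s₂ : ℝ) :
    E4 (fun θ₁ φ₁ θ₂ φ₂ =>
      Real.cos (s₁ * a * (Real.sin θ₁ * Real.sin φ₁ - Real.sin θ₂ * Real.sin φ₂)) *
      Real.cos (s₂ * a * (Real.sin θ₁ * Real.sin φ₁ - Real.sin θ₂ * Real.sin φ₂)))
    = (1 / 2) * ((J₀ ((s₁ + s₂) * a / 2)) ^ 4 + (J₀ ((s₁ - s₂) * a / 2)) ^ 4) := by
  set u := (s₁ + s₂) * a
  set v := (s₁ - s₂) * a
  have hprod : ∀ d,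
      cos (s₁ * a * d) * cos (s₂ * a * d) = 1 / 2 * cos (u * d) + 1 / 2 * cos (v * d) :=
    fun d => by
      simp only [u, v, add_mul, sub_mul, cos_add, cos_sub]
      ring
  have hinner : ∀ h₁,
      sinMulSinIntegral (fun h₂ => cos (s₁ * a * (h₁ - h₂)) * cos (s₂ * a * (h₁ - h₂))) =
        1 / 2 * (2 * π * J₀ (u / 2)) ^ 2 * cos (u * h₁) + 1 / 2 * (2 * π * J₀ (v / 2)) ^ 2 * cos (v * h₁) := by
    intro h₁
    simp only [hprod]
    rw [sinMulSinIntegral_add (by fun_prop) (by fun_prop), sinMulSinIntegral_const_mul,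
      sinMulSinIntegral_const_mul, sinMulSinIntegral_cos_mul_sub, sinMulSinIntegral_cos_mul_sub]
    ring
  change 1 / (2 * π) ^ 4 * sinMulSinIntegral (fun h₁ => sinMulSinIntegral fun h₂ =>
    cos (s₁ * a * (h₁ - h₂)) * cos (s₂ * a * (h₁ - h₂))) = _
  rw [funext hinner, sinMulSinIntegral_add (by fun_prop) (by fun_prop),
    sinMulSinIntegral_const_mul, sinMulSinIntegral_const_mul, sinMulSinIntegral_cos_mul,
    sinMulSinIntegral_cos_mul]
  field_simp
end
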